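/- arXiv:1001.3600 — 8 statements merged into one kernel-verified Lean document; each statement's English description precedes it below -/
import Mathlib

section
/- Let M : A × A → ℕ be a matrix with M_{j,k} ≥ 1 for at least one k for each j (so that τ_j(g) = Σ_k M_{j,k} g_k ∈ ℍ for g ∈ ℍ^A). Then the linear map τ : ℍ^A → ℍ^A is a quasicontraction: for all g, h ∈ ℍ^A, max_j γ(τ_j(g), τ_j(h)) ≤ max_j γ(g_j, h_j), where γ(a,b) = |a-b|²/(Im a · Im b). -/
open Complex

/-- `γ(a,b) = |a-b|² / (Im a · Im b)` on the upper half-plane. -/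
noncomputable def gam (a b : ℂ) : ℝ := (‖a - b‖)^2 / (a.im * b.im)

/-!
If `γ(z_k, w_k) ≤ C` for every `k`, then `|z_k - w_k| ≤ √C · √(Im z_k · Im w_k)`. For nonnegative
weights `m_k`, the triangle inequality and Cauchy–Schwarz give
`|Σ m_k z_k - Σ m_k w_k|² ≤ C (Σ m_k √(Im z_k Im w_k))² ≤ C · Im(Σ m_k z_k) · Im(Σ m_k w_k)`,
i.e. `γ(Σ m_k z_k, Σ m_k w_k) ≤ C`; apply this to each row of `M` with `C = γ_A(g, h)`.
-/

open Finset

lemma gam_le_iff {a b : ℂ} {C : ℝ} (ha : 0 < a.im) (hb : 0 < b.im) :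
    gam a b ≤ C ↔ ‖a - b‖ ^ 2 ≤ C * (a.im * b.im) :=
  div_le_iff₀ (mul_pos ha hb)

lemma gam_nonneg {a b : ℂ} (ha : 0 < a.im) (hb : 0 < b.im) : 0 ≤ gam a b :=
  div_nonneg (sq_nonneg _) (mul_pos ha hb).le

section WeightedSum

variable {ι : Type*} (s : Finset ι) {m : ι → ℝ} {z w : ι → ℂ}

lemma im_sum_ofReal_mul (m : ι → ℝ) (z : ι → ℂ) :
    (∑ i ∈ s, (m i : ℂ) * z i).im = ∑ i ∈ s, m i * (z i).im := by
  simp [im_sum]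

lemma im_sum_ofReal_mul_pos (hm : ∀ i ∈ s, 0 ≤ m i) (hm_pos : ∃ i ∈ s, 0 < m i)
    (hz : ∀ i ∈ s, 0 < (z i).im) : 0 < (∑ i ∈ s, (m i : ℂ) * z i).im := by
  rw [im_sum_ofReal_mul]
  obtain ⟨i, hi, hmi⟩ := hm_pos
  exact sum_pos' (fun k hk => mul_nonneg (hm k hk) (hz k hk).le)
    ⟨i, hi, mul_pos hmi (hz i hi)⟩

lemma norm_sum_ofReal_mul_sub_sq_le {C : ℝ} (hC : 0 ≤ C) (hm : ∀ i ∈ s, 0 ≤ m i)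
    (hz : ∀ i ∈ s, 0 ≤ (z i).im) (hw : ∀ i ∈ s, 0 ≤ (w i).im)
    (hzw : ∀ i ∈ s, ‖z i - w i‖ ^ 2 ≤ C * ((z i).im * (w i).im)) :
    ‖∑ i ∈ s, (m i : ℂ) * z i - ∑ i ∈ s, (m i : ℂ) * w i‖ ^ 2 ≤
      C * ((∑ i ∈ s, (m i : ℂ) * z i).im * (∑ i ∈ s, (m i : ℂ) * w i).im) := by
  have htri : ‖∑ i ∈ s, (m i : ℂ) * z i - ∑ i ∈ s, (m i : ℂ) * w i‖ ≤
      ∑ i ∈ s, m i * ‖z i - w i‖ := by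
    rw [← sum_sub_distrib]
    refine (norm_sum_le _ _).trans_eq (sum_congr rfl fun i hi => ?_)
    rw [← mul_sub, norm_mul, norm_real, Real.norm_of_nonneg (hm i hi)]
  calc _ ≤ (∑ i ∈ s, m i * ‖z i - w i‖) ^ 2 := by gcongr
    _ ≤ (∑ i ∈ s, m i * (z i).im) * ∑ i ∈ s, C * (m i * (w i).im) := by
      refine sum_sq_le_sum_mul_sum_of_sq_le_mul s (fun i hi => mul_nonneg (hm i hi) (hz i hi))
        (fun i hi => mul_nonneg hC (mul_nonneg (hm i hi) (hw i hi))) fun i hi => ?_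
      calc (m i * ‖z i - w i‖) ^ 2 = m i ^ 2 * ‖z i - w i‖ ^ 2 := mul_pow ..
        _ ≤ m i ^ 2 * (C * ((z i).im * (w i).im)) := by gcongr; exact hzw i hi
        _ = _ := by ring
    _ = _ := by rw [← mul_sum, im_sum_ofReal_mul, im_sum_ofReal_mul]; ring

lemma gam_sum_ofReal_mul_le {C : ℝ} (hm : ∀ i ∈ s, 0 ≤ m i) (hm_pos : ∃ i ∈ s, 0 < m i)
    (hz : ∀ i ∈ s, 0 < (z i).im) (hw : ∀ i ∈ s, 0 < (w i).im)
    (hzw : ∀ i ∈ s, gam (z i) (w i) ≤ C) :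
    gam (∑ i ∈ s, (m i : ℂ) * z i) (∑ i ∈ s, (m i : ℂ) * w i) ≤ C := by
  have hC : 0 ≤ C := by
    obtain ⟨i, hi, -⟩ := hm_pos
    exact (gam_nonneg (hz i hi) (hw i hi)).trans (hzw i hi)
  rw [gam_le_iff (im_sum_ofReal_mul_pos s hm hm_pos hz) (im_sum_ofReal_mul_pos s hm hm_pos hw)]
  exact norm_sum_ofReal_mul_sub_sq_le s hC hm (fun i hi => (hz i hi).le) (fun i hi => (hw i hi).le)
    fun i hi => (gam_le_iff (hz i hi) (hw i hi)).1 (hzw i hi)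

end WeightedSum

/-- The linear map `τ_j(g) = Σ_k M_{j,k} g_k` is a quasicontraction for
`γ_A(g,h) = max_j γ(g_j,h_j)` on `ℍ^A`, provided each row of `M` has a nonzero entry. -/
theorem tau_quasicontraction {A : Type*} [Fintype A] [Nonempty A] (M : A → A → ℕ)
    (hM : ∀ j, 1 ≤ ∑ k, M j k) (g h : A → ℂ)
    (hg : ∀ j, 0 < (g j).im) (hh : ∀ j, 0 < (h j).im) :
    Finset.univ.sup' Finset.univ_nonempty
        (fun j => gam (∑ k, (M j k : ℂ) * g k) (∑ k, (M j k : ℂ) * h k)) ≤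
      Finset.univ.sup' Finset.univ_nonempty (fun j => gam (g j) (h j)) := by
  refine Finset.sup'_le _ _ fun j _ => ?_
  obtain ⟨k, hk, hMk⟩ := exists_ne_zero_of_sum_ne_zero (Nat.one_le_iff_ne_zero.1 (hM j))
  simp_rw [← ofReal_natCast]
  exact gam_sum_ofReal_mul_le univ (fun k _ => Nat.cast_nonneg _)
    ⟨k, hk, Nat.cast_pos.2 (Nat.pos_of_ne_zero hMk)⟩ (fun k _ => hg k) (fun k _ => hh k)
    fun k hk => le_sup' (fun j => gam (g j) (h j)) hk
end

section
/- Let z ∈ ℂ with Im z ≥ 0 and let h ∈ ℍ^A satisfy the fixed point equation h_j = -1/(z + Σ_{k∈A} M_{j,k} h_k) for all j ∈ A, where M_{j,k} ∈ ℕ. Then for every j ∈ A: |h_j|² · Σ_k M_{j,k} Im h_k ≤ Im h_j. -/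
open Complex ComplexConjugate

theorem Complex.normSq_mul_im_eq_im_of_mul_eq_neg_one {h w : ℂ} (hw : h * w = -1) :
    normSq h * w.im = h.im := by
  have hconj : (normSq h : ℂ) * w = -conj h := by
    rw [← mul_conj, mul_comm h, mul_assoc, hw, mul_neg_one]
  simpa using congrArg im hconj

theorem fixed_point_imaginary_bound_general {A : Type*} [Fintype A]
    (M : A → A → ℕ) (z : ℂ) (hz : 0 ≤ z.im) (h : A → ℂ)
    (hfix : ∀ j, h j * (z + ∑ k, (M j k : ℂ) * h k) = -1) :
    ∀ j, ‖h j‖^2 * ∑ k, (M j k : ℝ) * (h k).im ≤ (h j).im := by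
  intro j
  have him : (z + ∑ k, (M j k : ℂ) * h k).im = z.im + ∑ k, (M j k : ℝ) * (h k).im := by
    simp [im_sum]
  calc ‖h j‖^2 * ∑ k, (M j k : ℝ) * (h k).im
      ≤ normSq (h j) * (z + ∑ k, (M j k : ℂ) * h k).im := by
        rw [Complex.sq_norm, him]
        exact mul_le_mul_of_nonneg_left (le_add_of_nonneg_left hz) (normSq_nonneg _)
    _ = (h j).im := normSq_mul_im_eq_im_of_mul_eq_neg_one (hfix j)

/-- If `h ∈ ℍ^A` is a fixed point of `Φ_z`, i.e. `h_j = -1/(z + Σ_k M_{j,k} h_k)`,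
with `Im z ≥ 0`, then `|h_j|² Σ_k M_{j,k} Im h_k ≤ Im h_j`. -/
theorem fixed_point_imaginary_bound {A : Type*} [Fintype A] [Nonempty A]
    (M : A → A → ℕ) (z : ℂ) (hz : 0 ≤ z.im) (h : A → ℂ) (hh : ∀ j, 0 < (h j).im)
    (hfix : ∀ j, h j * (z + ∑ k, (M j k : ℂ) * h k) = -1) :
    ∀ j, ‖h j‖^2 * ∑ k, (M j k : ℝ) * (h k).im ≤ (h j).im :=
  fixed_point_imaginary_bound_general M z hz h hfix
end

section
/- Let z ∈ ℂ with Im z ≥ 0, M : A × A → ℕ with M_{j,j} ≥ 1 for all j, and let h ∈ ℍ^A satisfy h_j = -1/(z + Σ_k M_{j,k} h_k) for all j ∈ A. Then |h_j| ≤ 1/√(M_{j,j}) for every j ∈ A. -/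
open Complex

/- The fixed-point equation says `w := z + Σ_k M_{j,k} h_k` equals `-1/h_j`, so
`Im w = Im h_j / |h_j|²`. Since every term of `w` has nonnegative imaginary part,
`Im w ≥ M_{j,j} Im h_j`; dividing by `Im h_j > 0` gives `M_{j,j} |h_j|² ≤ 1`. -/

lemma Complex.natCast_mul_im_le_im_add_sum {A : Type*} [Fintype A] (m : A → ℕ) (z : ℂ)
    (hz : 0 ≤ z.im) (h : A → ℂ) (hh : ∀ k, 0 ≤ (h k).im) (j : A) :
    (m j : ℝ) * (h j).im ≤ (z + ∑ k, (m k : ℂ) * h k).im := by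
  have hterm : ∀ k, 0 ≤ (m k : ℝ) * (h k).im := fun k => mul_nonneg (Nat.cast_nonneg _) (hh k)
  have hsingle : (m j : ℝ) * (h j).im ≤ ∑ k, (m k : ℝ) * (h k).im :=
    Finset.single_le_sum (f := fun k => (m k : ℝ) * (h k).im) (fun k _ => hterm k)
      (Finset.mem_univ j)
  simpa [im_sum] using add_le_add hz hsingle

lemma Complex.mul_normSq_le_one_of_mul_eq_neg_one {a w : ℂ} {c : ℝ} (ha : 0 < a.im)
    (hw : c * a.im ≤ w.im) (h : a * w = -1) : c * normSq a ≤ 1 := by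
  have ha0 : a ≠ 0 := ne_of_apply_ne im (by simpa using ha.ne')
  have hw_eq : w = -a⁻¹ := by
    field_simp
    linear_combination h
  have hnormSq : 0 < normSq a := normSq_pos.mpr ha0
  have him : c * a.im ≤ a.im / normSq a := by simpa [hw_eq, neg_div] using hw
  rw [le_div_iff₀ hnormSq, mul_right_comm] at him
  exact le_of_mul_le_mul_right (by linarith) ha

lemma Complex.norm_le_one_div_sqrt_of_mul_normSq_le_one {a : ℂ} {c : ℝ} (hc : 0 < c)
    (h : c * normSq a ≤ 1) : ‖a‖ ≤ 1 / √c := by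
  rw [norm_def, ← Real.sqrt_one, ← Real.sqrt_div' _ hc.le]
  exact Real.sqrt_le_sqrt ((le_div_iff₀' hc).mpr h)

theorem fixed_point_upper_bound_general {A : Type*} [Fintype A]
    (M : A → A → ℕ) (hMdiag : ∀ j, 1 ≤ M j j) (z : ℂ) (hz : 0 ≤ z.im)
    (h : A → ℂ) (hh : ∀ j, 0 < (h j).im)
    (hfix : ∀ j, h j * (z + ∑ k, (M j k : ℂ) * h k) = -1) :
    ∀ j, ‖h j‖ ≤ 1 / Real.sqrt (M j j) := by
  intro j
  refine norm_le_one_div_sqrt_of_mul_normSq_le_one (by exact_mod_cast hMdiag j) ?_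
  exact mul_normSq_le_one_of_mul_eq_neg_one (hh j)
    (natCast_mul_im_le_im_add_sum (M j) z hz h (fun k => (hh k).le) j) (hfix j)

/-- Upper bound for fixed points: if `M` has positive diagonal and
`h_j = -1/(z + Σ_k M_{j,k} h_k)` with `h ∈ ℍ^A`, `Im z ≥ 0`, then
`|h_j| ≤ 1/√(M_{j,j})`. -/
theorem fixed_point_upper_bound {A : Type*} [Fintype A] [Nonempty A]
    (M : A → A → ℕ) (hMdiag : ∀ j, 1 ≤ M j j) (z : ℂ) (hz : 0 ≤ z.im)
    (h : A → ℂ) (hh : ∀ j, 0 < (h j).im)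
    (hfix : ∀ j, h j * (z + ∑ k, (M j k : ℂ) * h k) = -1) :
    ∀ j, ‖h j‖ ≤ 1 / Real.sqrt (M j j) :=
  fixed_point_upper_bound_general M hMdiag z hz h hh hfix
end

section
/- Let M : A × A → ℕ have positive diagonal (M_{j,j} ≥ 1) and be primitive (some power Mⁿ has all entries positive). Let E ∈ ℝ and let h ∈ (closure of ℍ)^A with each Im h_j ≥ 0 satisfy h_j = -1/(E + Σ_k M_{j,k} h_k) for all j ∈ A, and suppose the lower bound |h_j| ≥ 1/(|E| + Σ_k M_{j,k}/√(M_{j,j})) > 0 holds for all j. Then either Im h_j > 0 for all j ∈ A, or Im h_j = 0 for all j ∈ A. -/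
open Complex

/-!
Taking imaginary parts in `h_j (E + Σ_k M_{j,k} h_k) = -1` gives
`Im h_j = |h_j|² Σ_k M_{j,k} Im h_k`. As all `Im h_k ≥ 0`, positivity of `Im h_k` spreads to every
`j` with `M_{j,k} ≠ 0`, hence along the paths of the graph of `M`; primitivity connects every `j`
to every `k`.
-/

theorem Matrix.imp_of_pow_apply_ne_zero {n R : Type*} [Fintype n] [DecidableEq n] [Semiring R]
    {M : Matrix n n R} {P : n → Prop} (hM : ∀ i j, M i j ≠ 0 → P j → P i) :
    ∀ k i j, (M ^ k) i j ≠ 0 → P j → P i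
  | 0, i, j, hij, hj => by
    obtain rfl : i = j := by
      by_contra hne
      exact hij (Matrix.one_apply_ne hne)
    exact hj
  | k + 1, i, j, hij, hj => by
    rw [pow_succ', Matrix.mul_apply] at hij
    obtain ⟨l, -, hl⟩ := Finset.exists_ne_zero_of_sum_ne_zero hij
    exact hM i l (left_ne_zero_of_mul hl)
      (Matrix.imp_of_pow_apply_ne_zero hM k l j (right_ne_zero_of_mul hl) hj)

theorem Complex.im_eq_normSq_mul_im_of_mul_eq_neg_one {z w : ℂ} (h : z * w = -1) :
    z.im = normSq z * w.im := by
  have hz : z ≠ 0 := by rintro rfl; simp at h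
  have hw : -w = z⁻¹ := eq_inv_of_mul_eq_one_right (by rw [mul_neg, h, neg_neg])
  rw [← neg_neg w, hw, neg_im, inv_im, neg_div, neg_neg, mul_div_cancel₀ _ (normSq_pos.mpr hz).ne']

section FixedPoint

variable {A : Type*} [Fintype A] {M : Matrix A A ℕ} {E : ℝ} {h : A → ℂ}

theorem im_eq_normSq_mul_sum_of_fixed_point {j : A}
    (hfix : h j * ((E : ℂ) + ∑ k, (M j k : ℂ) * h k) = -1) :
    (h j).im = normSq (h j) * ∑ k, (M j k : ℝ) * (h k).im := by
  simpa [im_sum] using im_eq_normSq_mul_im_of_mul_eq_neg_one hfix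

theorem im_pos_of_fixed_point (hh : ∀ j, 0 ≤ (h j).im)
    {j k : A} (hfix : h j * ((E : ℂ) + ∑ k, (M j k : ℂ) * h k) = -1)
    (hjk : M j k ≠ 0) (hk : 0 < (h k).im) : 0 < (h j).im := by
  have hj : h j ≠ 0 := fun h0 => by simp [h0] at hfix
  have hsum : 0 < ∑ l, (M j l : ℝ) * (h l).im :=
    Finset.sum_pos' (fun l _ => mul_nonneg (Nat.cast_nonneg _) (hh l))
      ⟨k, Finset.mem_univ k, mul_pos (by exact_mod_cast Nat.pos_of_ne_zero hjk) hk⟩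
  rw [im_eq_normSq_mul_sum_of_fixed_point hfix]
  exact mul_pos (normSq_pos.mpr hj) hsum

end FixedPoint

theorem boundary_fixed_point_dichotomy_general {A : Type*} [Fintype A]
    [DecidableEq A] (M : Matrix A A ℕ)
    (hMprim : ∃ n : ℕ, ∀ j k, 1 ≤ (M ^ n) j k)
    (E : ℝ) (h : A → ℂ) (hh : ∀ j, 0 ≤ (h j).im)
    (hfix : ∀ j, h j * ((E : ℂ) + ∑ k, (M j k : ℂ) * h k) = -1) :
    (∀ j, 0 < (h j).im) ∨ (∀ j, (h j).im = 0) := by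
  obtain ⟨n, hn⟩ := hMprim
  by_cases hex : ∃ k, 0 < (h k).im
  · obtain ⟨k, hk⟩ := hex
    left
    intro j
    exact Matrix.imp_of_pow_apply_ne_zero (P := fun i => 0 < (h i).im)
      (fun i l hil hl => im_pos_of_fixed_point hh (hfix i) hil hl) n j k
      (Nat.one_le_iff_ne_zero.mp (hn j k)) hk
  · simp only [not_exists, not_lt] at hex
    exact Or.inr fun j => le_antisymm (hex j) (hh j)

/-- Dichotomy for boundary fixed points: if `M` has positive diagonal and is
primitive, `E ∈ ℝ`, and `h` lies in the closed upper half-plane componentwise,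
satisfies the fixed point equation `h_j = -1/(E + Σ_k M_{j,k} h_k)` together with the
uniform lower bound `0 < 1/(|E| + Σ_k M_{j,k}/√(M_{j,j})) ≤ |h_j|`, then either all
components have strictly positive imaginary part, or all are real. -/
theorem boundary_fixed_point_dichotomy {A : Type*} [Fintype A] [Nonempty A]
    [DecidableEq A] (M : Matrix A A ℕ) (hMdiag : ∀ j, 1 ≤ M j j)
    (hMprim : ∃ n : ℕ, ∀ j k, 1 ≤ (M ^ n) j k)
    (E : ℝ) (h : A → ℂ) (hh : ∀ j, 0 ≤ (h j).im)
    (hfix : ∀ j, h j * ((E : ℂ) + ∑ k, (M j k : ℂ) * h k) = -1)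
    (hlow : ∀ j, 1 / (|E| + ∑ k, (M j k : ℝ) / Real.sqrt (M j j)) ≤ ‖h j‖)
    (hpos : ∀ j, 0 < 1 / (|E| + ∑ k, (M j k : ℝ) / Real.sqrt (M j j))) :
    (∀ j, 0 < (h j).im) ∨ (∀ j, (h j).im = 0) :=
  boundary_fixed_point_dichotomy_general M hMprim E h hh hfix
end

section
/- Suppose M : A × A → ℕ is such that the associated tree is non-regular, i.e., the row sums Σ_l M_{j,l} are not all equal. Let E ∈ ℝ, E ≠ 0, and suppose ξ ∈ ℍ^A satisfies Σ_k M_{j,k} ξ_k ξ_j + E ξ_j + 1 = 0 for all j ∈ A, and that there exist positive real numbers r_j > 0 with ξ_j = r_j ξ_1 for all j (fixing some element 1 ∈ A with r_1 = 1). Then a contradiction follows; i.e., no such ξ exists. Equivalently: if E ≠ 0 and the row sums of M are not all equal, any solution ξ ∈ ℍ^A of the polynomial system has two components ξ_j, ξ_k that are not positive real multiples of each other. -/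
open Complex

/-- If `c z² + d z = 0` for real `c, d` and `z` with positive imaginary part,
then `c = 0` and `d = 0`. -/
lemma quad_coeffs_zero (c d : ℝ) (z : ℂ) (hz : 0 < z.im)
    (h : (c : ℂ) * z ^ 2 + (d : ℂ) * z = 0) : c = 0 ∧ d = 0 := by
  have him0 := congrArg Complex.im h
  simp [pow_two, Complex.mul_im, Complex.mul_re] at him0
  have hre0 := congrArg Complex.re h
  simp [pow_two, Complex.mul_im, Complex.mul_re] at hre0
  have h3 : c * ((z.re ^ 2 + z.im ^ 2) * z.im) = 0 := by
    linear_combination z.re * him0 - z.im * hre0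
  have hpos : 0 < (z.re ^ 2 + z.im ^ 2) * z.im :=
    mul_pos (add_pos_of_nonneg_of_pos (sq_nonneg _) (pow_pos hz 2)) hz
  have hc : c = 0 := by
    rcases mul_eq_zero.mp h3 with h' | h'
    · exact h'
    · exact absurd h' hpos.ne'
  refine ⟨hc, ?_⟩
  have hd : d * z.im = 0 := by linear_combination him0 - (z.re * z.im + z.im * z.re) * hc
  rcases mul_eq_zero.mp hd with h' | h'
  · exact h'
  · exact absurd h' hz.ne'

/-- For a non-regular substitution matrix (not all row sums equal) and energy
`E ≠ 0`, no solution `ξ ∈ ℍ^A` of the polynomial system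
`Σ_k M_{j,k} ξ_k ξ_j + E ξ_j + 1 = 0` can have all its components positive real
multiples of a fixed component. -/
theorem no_aligned_solution_nonregular {A : Type*} [Fintype A] [Nonempty A]
    (M : A → A → ℕ) (hnonreg : ∃ j k : A, (∑ l, M j l) ≠ ∑ l, M k l)
    (E : ℝ) (hE : E ≠ 0) (o : A) (ξ : A → ℂ) (hξ : ∀ j, 0 < (ξ j).im)
    (hsys : ∀ j, (∑ k, (M j k : ℂ) * ξ k) * ξ j + (E : ℂ) * ξ j + 1 = 0)
    (r : A → ℝ) (hr : ∀ j, 0 < r j) (hro : r o = 1)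
    (halign : ∀ j, ξ j = (r j : ℂ) * ξ o) :
    False := by
  set z := ξ o with hz
  have hzim : 0 < z.im := hξ o
  set a : A → ℝ := fun j => (∑ k, (M j k : ℝ) * r k) * r j with ha
  set b : A → ℝ := fun j => E * r j with hb
  have key : ∀ j, (a j : ℂ) * z ^ 2 + (b j : ℂ) * z + 1 = 0 := by
    intro j
    have h := hsys j
    rw [halign j] at h
    have hs : (∑ k, (M j k : ℂ) * ξ k) = ((∑ k, (M j k : ℝ) * r k : ℝ) : ℂ) * z := by
      push_cast
      rw [Finset.sum_mul]
      exact Finset.sum_congr rfl fun k _ => by rw [halign k]; ring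
    rw [hs] at h
    simp only [ha, hb]
    push_cast
    push_cast at h
    linear_combination h
  have heq : ∀ j k, a j = a k ∧ b j = b k := by
    intro j k
    have h1 := key j
    have h2 := key k
    have hd : ((a j - a k : ℝ) : ℂ) * z ^ 2 + ((b j - b k : ℝ) : ℂ) * z = 0 := by
      push_cast
      linear_combination h1 - h2
    have := quad_coeffs_zero _ _ z hzim hd
    constructor <;> linarith [this.1, this.2]
  have hr1 : ∀ j, r j = 1 := by
    intro j
    have h := (heq j o).2
    simp only [hb, hro, mul_one] at h
    exact mul_left_cancel₀ hE (h.trans (mul_one E).symm)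
  obtain ⟨j, k, hjk⟩ := hnonreg
  apply hjk
  have := (heq j k).1
  simp only [ha, hr1, mul_one] at this
  have : (∑ l, (M j l : ℝ)) = ∑ l, (M k l : ℝ) := by simpa [hr1] using this
  exact_mod_cast this
end

section
/- Let c₀ ∈ [0,1). Define c : (0,∞) → ℝ by c(r) = cosh⁻¹(c₀ r + 1) / cosh⁻¹(r + 1). Then sup over r ∈ (0, R] of c(r) is strictly less than 1 for every R > 0; in particular for all r > 0, cosh⁻¹(c₀ r + 1) < cosh⁻¹(r + 1), and lim_{r→0⁺} c(r) = √c₀ < 1. -/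
/-!
With `t = arcosh (x + 1)` we have `cosh t = x + 1`, and `1 + t² / 2 ≤ cosh t ≤ exp (t² / 2)`
together with `log (x + 1) ≥ x / (x + 1)` give `2x / (x + 1) ≤ t² ≤ 2x`. Hence the ratio
`c(r)` lies between `√(c₀ / (c₀ r + 1))` and `√(c₀ (r + 1))`, which both tend to `√c₀` as
`r → 0⁺`. Extended by `√c₀` at `0`, `c` is continuous on the compact interval `[0, R]` and
`< 1` everywhere there, so its maximum `c₁` is `< 1`.
-/

open Real Filter

/-- Inverse hyperbolic cosine: `cosh⁻¹(x) = log (x + √(x² - 1))` for `x ≥ 1`. -/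
noncomputable def arcosh (x : ℝ) : ℝ := Real.log (x + Real.sqrt (x^2 - 1))

open Set Topology

theorem arcosh_eq_real_arcosh : _root_.arcosh = Real.arcosh := rfl

theorem Real.one_add_sq_div_two_le_cosh (x : ℝ) : 1 + x ^ 2 / 2 ≤ cosh x := by
  have := sum_le_hasSum (Finset.range 2) (fun n _ => ?_) (hasSum_cosh x)
  · simpa [Finset.sum_range_succ] using this
  · rw [pow_mul]; positivity

theorem Real.arcosh_add_one_le_sqrt {x : ℝ} (hx : 0 ≤ x) : Real.arcosh (x + 1) ≤ √(2 * x) := by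
  have hcosh := cosh_arcosh (by linarith : 1 ≤ x + 1)
  have := one_add_sq_div_two_le_cosh (Real.arcosh (x + 1))
  exact Real.le_sqrt_of_sq_le (by linarith)

theorem Real.sqrt_le_arcosh_add_one {x : ℝ} (hx : 0 ≤ x) :
    √(2 * x / (x + 1)) ≤ Real.arcosh (x + 1) := by
  set t := Real.arcosh (x + 1)
  have hcosh : cosh t = x + 1 := cosh_arcosh (by linarith)
  have hlog : log (x + 1) ≤ t ^ 2 / 2 := by
    rw [← hcosh, Real.log_le_iff_le_exp (cosh_pos t)]
    exact cosh_le_exp_half_sq t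
  have hinv := one_sub_inv_le_log_of_pos (by linarith : 0 < x + 1)
  have hdiv : 2 * x / (x + 1) = 2 * (1 - (x + 1)⁻¹) := by field_simp; ring
  rw [Real.sqrt_le_left (arcosh_nonneg (by linarith)), hdiv]
  linarith

variable {c r : ℝ}

theorem Real.arcosh_ratio_le_sqrt (hc : 0 ≤ c) (hr : 0 < r) :
    Real.arcosh (c * r + 1) / Real.arcosh (r + 1) ≤ √(c * (r + 1)) := by
  have hcr : 0 ≤ c * r := mul_nonneg hc hr.le
  rw [div_le_iff₀ (arcosh_pos (by linarith))]
  calc Real.arcosh (c * r + 1) ≤ √(2 * (c * r)) := arcosh_add_one_le_sqrt hcr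
    _ = √(c * (r + 1)) * √(2 * r / (r + 1)) := by
        rw [← Real.sqrt_mul (by positivity)]; congr 1; field_simp
    _ ≤ √(c * (r + 1)) * Real.arcosh (r + 1) := by
        gcongr; exact sqrt_le_arcosh_add_one hr.le

theorem Real.sqrt_le_arcosh_ratio (hc : 0 ≤ c) (hr : 0 < r) :
    √(c / (c * r + 1)) ≤ Real.arcosh (c * r + 1) / Real.arcosh (r + 1) := by
  have hcr : 0 ≤ c * r := mul_nonneg hc hr.le
  rw [le_div_iff₀ (arcosh_pos (by linarith))]
  calc √(c / (c * r + 1)) * Real.arcosh (r + 1) ≤ √(c / (c * r + 1)) * √(2 * r) := by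
        gcongr; exact arcosh_add_one_le_sqrt hr.le
    _ = √(2 * (c * r) / (c * r + 1)) := by
        rw [← Real.sqrt_mul (by positivity)]; congr 1; field_simp
    _ ≤ Real.arcosh (c * r + 1) := sqrt_le_arcosh_add_one hcr

theorem Real.tendsto_arcosh_ratio (hc : 0 ≤ c) :
    Tendsto (fun r => Real.arcosh (c * r + 1) / Real.arcosh (r + 1)) (𝓝[>] 0) (𝓝 √c) := by
  have hlower : Tendsto (fun r => √(c / (c * r + 1))) (𝓝[>] 0) (𝓝 √c) := by
    have : ContinuousAt (fun r => √(c / (c * r + 1))) 0 := by fun_prop (disch := simp)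
    simpa using this.tendsto.mono_left nhdsWithin_le_nhds
  have hupper : Tendsto (fun r => √(c * (r + 1))) (𝓝[>] 0) (𝓝 √c) :=
    (Continuous.tendsto' (by fun_prop) 0 _ (by simp)).mono_left nhdsWithin_le_nhds
  refine tendsto_of_tendsto_of_tendsto_of_le_of_le' hlower hupper ?_ ?_ <;>
    filter_upwards [self_mem_nhdsWithin] with r hr
  exacts [sqrt_le_arcosh_ratio hc hr, arcosh_ratio_le_sqrt hc hr]

theorem Real.continuousOn_arcosh_ratio (hc : 0 ≤ c) :
    ContinuousOn (fun r => Real.arcosh (c * r + 1) / Real.arcosh (r + 1)) (Ioi 0) := by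
  refine ContinuousOn.div ?_ ?_ fun r hr => (arcosh_pos (by simpa using hr)).ne'
  · exact continuousOn_arcosh.comp (by fun_prop) fun r hr => by
      simpa using mul_nonneg hc (le_of_lt hr)
  · exact continuousOn_arcosh.comp (by fun_prop) fun r hr => by simpa using le_of_lt hr

theorem Real.arcosh_mul_add_one_lt (hc : 0 ≤ c) (hc1 : c < 1) (hr : 0 < r) :
    Real.arcosh (c * r + 1) < Real.arcosh (r + 1) :=
  (arcosh_lt_arcosh (by positivity) (by positivity)).2 (by nlinarith)

theorem ContinuousOn.exists_forall_le_lt_of_tendsto_nhdsGT {α β : Type*} [LinearOrder α]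
    [TopologicalSpace α] [OrderTopology α] [CompactIccSpace α] [LinearOrder β]
    [TopologicalSpace β] [OrderClosedTopology β] {f : α → β} {a b : α} {L c : β}
    (hf : ContinuousOn f (Ioc a b)) (hlim : Tendsto f (𝓝[>] a) (𝓝 L)) (hL : L < c)
    (hlt : ∀ x ∈ Ioc a b, f x < c) : ∃ c' < c, ∀ x ∈ Ioc a b, f x ≤ c' := by
  classical
  rcases (Icc a b).eq_empty_or_nonempty with hab | hab
  · exact ⟨L, hL, fun x hx => absurd (Ioc_subset_Icc_self hx) (hab ▸ notMem_empty x)⟩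
  -- extend `f` to `[a, b]` by its limit at `a`, and maximise the extension
  have hg : ContinuousOn (Function.update f a L) (Icc a b) := by
    intro x hx
    rcases eq_or_ne x a with rfl | hxa
    · exact continuousWithinAt_update_same.2
        (hlim.mono_left (nhdsWithin_mono _ fun y hy => lt_of_le_of_ne hy.1.1 (Ne.symm hy.2)))
    · rw [continuousWithinAt_update_of_ne hxa, ← continuousWithinAt_sdiff_singleton (y := a),
        Icc_sdiff_left]
      exact hf x ⟨lt_of_le_of_ne hx.1 (Ne.symm hxa), hx.2⟩
  obtain ⟨x₀, hx₀, hmax⟩ := isCompact_Icc.exists_isMaxOn hab hg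
  refine ⟨Function.update f a L x₀, ?_, fun x hx => ?_⟩
  · rcases eq_or_ne x₀ a with rfl | hx₀a
    · simpa using hL
    · rw [Function.update_of_ne hx₀a]
      exact hlt x₀ ⟨lt_of_le_of_ne hx₀.1 (Ne.symm hx₀a), hx₀.2⟩
  · have : Function.update f a L x ≤ Function.update f a L x₀ := hmax (Ioc_subset_Icc_self hx)
    rwa [Function.update_of_ne hx.1.ne'] at this

/-- For `c₀ ∈ [0,1)` and `c(r) = cosh⁻¹(c₀ r + 1)/cosh⁻¹(r + 1)`:
(i) `cosh⁻¹(c₀ r + 1) < cosh⁻¹(r + 1)` for all `r > 0`;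
(ii) `c(r) → √c₀ < 1` as `r → 0⁺`;
(iii) for each `R > 0` there is `c₁ < 1` with
`cosh⁻¹(c₀ r + 1) ≤ c₁ cosh⁻¹(r + 1)` for all `r ∈ (0, R]`. -/
theorem arcosh_ratio_lt_one (c₀ : ℝ) (hc₀ : 0 ≤ c₀) (hc₀1 : c₀ < 1) :
    (∀ r : ℝ, 0 < r → _root_.arcosh (c₀ * r + 1) < _root_.arcosh (r + 1)) ∧
    (Tendsto (fun r : ℝ => _root_.arcosh (c₀ * r + 1) / _root_.arcosh (r + 1))
      (nhdsWithin 0 (Set.Ioi 0)) (nhds (Real.sqrt c₀)) ∧ Real.sqrt c₀ < 1) ∧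
    (∀ R : ℝ, 0 < R → ∃ c₁ : ℝ, c₁ < 1 ∧
      ∀ r ∈ Set.Ioc (0 : ℝ) R, _root_.arcosh (c₀ * r + 1) ≤ c₁ * _root_.arcosh (r + 1)) := by
  rw [arcosh_eq_real_arcosh]
  have hden : ∀ r : ℝ, 0 < r → 0 < Real.arcosh (r + 1) := fun r hr => arcosh_pos (by linarith)
  have hsqrt : √c₀ < 1 := by rw [Real.sqrt_lt' one_pos]; linarith
  refine ⟨fun r => arcosh_mul_add_one_lt hc₀ hc₀1, ⟨tendsto_arcosh_ratio hc₀, hsqrt⟩, fun R _ => ?_⟩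
  obtain ⟨c₁, hc₁, hle⟩ := ((continuousOn_arcosh_ratio hc₀).mono Ioc_subset_Ioi_self)
    |>.exists_forall_le_lt_of_tendsto_nhdsGT (tendsto_arcosh_ratio hc₀) hsqrt fun r hr =>
      (div_lt_one (hden r hr.1)).2 (arcosh_mul_add_one_lt hc₀ hc₀1 hr.1)
  exact ⟨c₁, hc₁, fun r hr => (div_le_iff₀ (hden r hr.1)).1 (hle r hr)⟩
end

section
/- Let z ∈ ℂ with Im z ≥ 0, M : A × A → ℕ, and let h ∈ ℍ^A be a fixed point of Φ_z, where (Φ_z(g))_j = -1/(z + Σ_k M_{j,k} g_k). Then for all g ∈ ℍ^A and j, k ∈ A with Φ_{z,j}(g) ≠ h_j and Φ_{z,k}(g) ≠ h_k: arg((Φ_{z,j}(g) - h_j) · conj(Φ_{z,k}(g) - h_k)) = arg(τ_j(g-h) · conj(τ_k(g-h))) + arg(Φ_{z,j}(g) · conj(Φ_{z,k}(g))) + arg(h_j · conj(h_k)) as elements of ℝ/2πℤ, where τ_j(w) = Σ_l M_{j,l} w_l. -/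
open Complex

/-- The recursion map `Φ_z(g)_j = -1/(z + Σ_k M_{j,k} g_k)`. -/
noncomputable def Phi {A : Type*} [Fintype A] (M : A → A → ℕ) (z : ℂ)
    (g : A → ℂ) (j : A) : ℂ := -1 / (z + ∑ k, (M j k : ℂ) * g k)

/-- The angle identity: if `h ∈ ℍ^A` is a fixed point of `Φ_z` then, in `ℝ/2πℤ`,
`arg((Φ_j(g) - h_j) conj(Φ_k(g) - h_k)) = arg(τ_j(g-h) conj(τ_k(g-h)))
 + arg(Φ_j(g) conj(Φ_k(g))) + arg(h_j conj(h_k))`, where `τ_j(w) = Σ_l M_{j,l} w_l`. -/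
theorem angle_identity {A : Type*} [Fintype A] [Nonempty A]
    (M : A → A → ℕ) (z : ℂ) (hz : 0 ≤ z.im)
    (g h : A → ℂ) (hg : ∀ j, 0 < (g j).im) (hh : ∀ j, 0 < (h j).im)
    (hgden : ∀ j, z + ∑ l, (M j l : ℂ) * g l ≠ 0)
    (hΦg : ∀ j, 0 < (Phi M z g j).im)
    (hfix : ∀ j, Phi M z h j = h j)
    (j k : A) (hj : Phi M z g j ≠ h j) (hk : Phi M z g k ≠ h k) :
    ((Complex.arg ((Phi M z g j - h j) * (starRingEnd ℂ) (Phi M z g k - h k)) :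
        Real.Angle)) =
      (Complex.arg ((∑ l, (M j l : ℂ) * (g l - h l)) *
          (starRingEnd ℂ) (∑ l, (M k l : ℂ) * (g l - h l))) : Real.Angle) +
      (Complex.arg (Phi M z g j * (starRingEnd ℂ) (Phi M z g k)) : Real.Angle) +
      (Complex.arg (h j * (starRingEnd ℂ) (h k)) : Real.Angle) := by
  -- denominators for h are nonzero
  have hhden : ∀ i, z + ∑ l, (M i l : ℂ) * h l ≠ 0 := by
    intro i h0
    have := hfix i
    rw [Phi, h0, div_zero] at this
    exact (hh i).ne' (by rw [← this]; simp)
  have hhne : ∀ i, h i ≠ 0 := fun i => fun h0 => (hh i).ne' (by rw [h0]; simp)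
  have hΦne : ∀ i, Phi M z g i ≠ 0 := fun i => fun h0 => (hΦg i).ne' (by rw [h0]; simp)
  -- the key factorization
  have key : ∀ i, Phi M z g i - h i =
      (∑ l, (M i l : ℂ) * (g l - h l)) * Phi M z g i * h i := by
    intro i
    have hs : (∑ l, (M i l : ℂ) * (g l - h l)) =
        (z + ∑ l, (M i l : ℂ) * g l) - (z + ∑ l, (M i l : ℂ) * h l) := by
      rw [add_sub_add_left_eq_sub, ← Finset.sum_sub_distrib]
      exact Finset.sum_congr rfl fun l _ => by ring
    rw [← hfix i, Phi, Phi, hs]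
    have ha := hgden i
    have hb := hhden i
    field_simp
    ring
  have hτj : (∑ l, (M j l : ℂ) * (g l - h l)) ≠ 0 := by
    intro h0
    apply hj
    have := key j
    rw [h0, zero_mul, zero_mul] at this
    exact sub_eq_zero.mp this
  have hτk : (∑ l, (M k l : ℂ) * (g l - h l)) ≠ 0 := by
    intro h0
    apply hk
    have := key k
    rw [h0, zero_mul, zero_mul] at this
    exact sub_eq_zero.mp this
  have hre : (Phi M z g j - h j) * (starRingEnd ℂ) (Phi M z g k - h k) =
      ((∑ l, (M j l : ℂ) * (g l - h l)) *
          (starRingEnd ℂ) (∑ l, (M k l : ℂ) * (g l - h l))) *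
        ((Phi M z g j * (starRingEnd ℂ) (Phi M z g k)) *
          (h j * (starRingEnd ℂ) (h k))) := by
    rw [key j, key k]
    simp only [map_mul]
    ring
  rw [hre]
  have h1 : (∑ l, (M j l : ℂ) * (g l - h l)) *
      (starRingEnd ℂ) (∑ l, (M k l : ℂ) * (g l - h l)) ≠ 0 :=
    mul_ne_zero hτj ((map_ne_zero _).mpr hτk)
  have h2 : Phi M z g j * (starRingEnd ℂ) (Phi M z g k) ≠ 0 :=
    mul_ne_zero (hΦne j) ((map_ne_zero _).mpr (hΦne k))
  have h3 : h j * (starRingEnd ℂ) (h k) ≠ 0 :=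
    mul_ne_zero (hhne j) ((map_ne_zero _).mpr (hhne k))
  rw [Complex.arg_mul_coe_angle h1 (mul_ne_zero h2 h3),
    Complex.arg_mul_coe_angle h2 h3, ← add_assoc]
end

section
/- Consider the tree T with two labels {1, 2} built from the substitution matrix M = [[0,2],[1,0]] with root labeled 1 (so each vertex labeled 1 has two forward neighbors labeled 2, and each vertex labeled 2 has one forward neighbor labeled 1). Define φ : V → ℝ by φ(x) = 0 if |x| is even, and φ(x) = ± 2^{-k} on vertices of sphere 2k+1 chosen with alternating signs so that the two forward neighbors of each vertex in an even sphere carry values +2^{-k} and -2^{-k}. Then φ ∈ ℓ²(V), φ ≠ 0, and the adjacency operator L satisfies Lφ = 0; in particular 0 is an eigenvalue of L. -/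
/-
φ vanishes on label-1 vertices, so Lφ vanishes at every label-2 vertex. A label-1 vertex is
adjacent to its two children and, unless it is the root, to its parent. At the root the two
children carry 1 and -1; elsewhere each child carries -1/2 times the value of the parent, so
the three values cancel. Finally φ² equals 4^{-k} on the 2^{k+1} vertices of sphere 2k+1,
hence it is dominated by a convergent geometric series in the length of the choice word.
-/

/-- Vertices of the tree `T(M,1)` for `M = [[0,2],[1,0]]` with root labeled `1`:
`(false, s)` is a label-1 vertex at sphere `2|s|`, determined by the binary choices
`s` made at its label-1 ancestors; `(true, s)` with `s ≠ []` is a label-2 vertex at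
sphere `2|s| - 1`.  The root is `(false, [])`. -/
def TreeV : Type := {p : Bool × List Bool // p.1 = true → p.2 ≠ []}

/-- Adjacency: a label-1 vertex `(false, s)` is adjacent to its parent `(true, s)`
(when `s ≠ []`) and to its two children `(true, b :: s)`, `b ∈ Bool`; a label-2
vertex `(true, s)` is adjacent to its parent `(false, t)` with `s = b :: t` and to
its single child `(false, s)`. -/
def treeAdj (x y : TreeV) : Prop :=
  (x.1.1 = false ∧ y.1.1 = true ∧ (y.1.2 = x.1.2 ∨ ∃ b, y.1.2 = b :: x.1.2)) ∨
  (y.1.1 = false ∧ x.1.1 = true ∧ (x.1.2 = y.1.2 ∨ ∃ b, x.1.2 = b :: y.1.2))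

/-- The eigenfunction: `0` on even spheres (label-1 vertices); on a label-2 vertex of
sphere `2k+1` with choice word `t` (`|t| = k+1`) the value `±2^{-k}`, the sign being
`(-1)^k` times the sign of the root-level choice. -/
noncomputable def treePhi (x : TreeV) : ℝ :=
  if x.1.1 = false then 0
  else (if x.1.2.getLast! = true then 1 else -1) * (-(1/2) : ℝ) ^ (x.1.2.length - 1)

theorem tsum_ite_eq_sum_of_iff {α β : Type*} [AddCommMonoid α] [TopologicalSpace α]
    {p : β → Prop} [DecidablePred p] (s : Finset β) (hs : ∀ b, p b ↔ b ∈ s) (f : β → α) :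
    (∑' b, if p b then f b else 0) = ∑ b ∈ s, f b := by
  rw [tsum_eq_sum fun b hb => if_neg ((hs b).not.mpr hb)]
  exact Finset.sum_congr rfl fun b hb => if_pos ((hs b).mpr hb)

theorem List.summable_pow_length {α : Type*} [Fintype α] {r : ℝ} (hr : 0 ≤ r)
    (h : Fintype.card α * r < 1) : Summable fun l : List α => r ^ l.length := by
  have hsigma : (fun l : List α => r ^ l.length) ∘ List.equivSigmaTuple.symm =
      fun p => r ^ p.1 := by
    ext ⟨n, v⟩
    simp [List.equivSigmaTuple]
  rw [← List.equivSigmaTuple.symm.summable_iff, hsigma,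
    summable_sigma_of_nonneg fun _ => pow_nonneg hr _]
  refine ⟨fun _ => .of_finite, ?_⟩
  simpa [List.equivSigmaTuple, mul_pow] using summable_geometric_of_lt_one (by positivity) h

namespace TreeV

def label1 (s : List Bool) : TreeV := ⟨(false, s), fun h => absurd h Bool.false_ne_true⟩

def label2 (b : Bool) (s : List Bool) : TreeV := ⟨(true, b :: s), fun _ => List.cons_ne_nil b s⟩

theorem ext_iff {x y : TreeV} : x = y ↔ x.1 = y.1 := Subtype.ext_iff

@[simp] theorem val_label1 (s : List Bool) : (label1 s).1 = (false, s) := rfl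

@[simp] theorem val_label2 (b : Bool) (s : List Bool) : (label2 b s).1 = (true, b :: s) := rfl

@[elab_as_elim]
theorem label_cases {motive : TreeV → Prop} (label1 : ∀ s, motive (label1 s))
    (label2 : ∀ b s, motive (label2 b s)) (x : TreeV) : motive x := by
  obtain ⟨⟨_ | _, _ | ⟨b, s⟩⟩, hx⟩ := x
  · exact label1 []
  · exact label1 (b :: s)
  · exact absurd rfl (hx rfl)
  · exact label2 b s

theorem treeAdj_label2_iff (b : Bool) (s : List Bool) (y : TreeV) :
    treeAdj (label2 b s) y ↔ y = label1 (b :: s) ∨ y = label1 s := by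
  induction y using label_cases <;> simp [treeAdj, ext_iff, eq_comm]

theorem treeAdj_label1_nil_iff (y : TreeV) :
    treeAdj (label1 []) y ↔ y = label2 true [] ∨ y = label2 false [] := by
  induction y using label_cases with
  | label1 => simp [treeAdj, ext_iff]
  | label2 b => cases b <;> simp [treeAdj, ext_iff]

theorem treeAdj_label1_cons_iff (a : Bool) (t : List Bool) (y : TreeV) :
    treeAdj (label1 (a :: t)) y ↔
      y = label2 a t ∨ y = label2 true (a :: t) ∨ y = label2 false (a :: t) := by
  induction y using label_cases with
  | label1 => simp [treeAdj, ext_iff]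
  | label2 b => cases b <;> simp [treeAdj, ext_iff, eq_comm]

open scoped Classical in
noncomputable def adjOp (f : TreeV → ℝ) (x : TreeV) : ℝ :=
  ∑' y, if treeAdj x y then f y else 0

theorem adjOp_label2 (f : TreeV → ℝ) (b : Bool) (s : List Bool) :
    adjOp f (label2 b s) = f (label1 (b :: s)) + f (label1 s) := by
  classical
  rw [adjOp, tsum_ite_eq_sum_of_iff {label1 (b :: s), label1 s} (by simp [treeAdj_label2_iff]),
    Finset.sum_pair (by simp [ext_iff])]

theorem adjOp_label1_nil (f : TreeV → ℝ) :
    adjOp f (label1 []) = f (label2 true []) + f (label2 false []) := by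
  classical
  rw [adjOp, tsum_ite_eq_sum_of_iff {label2 true [], label2 false []}
    (by simp [treeAdj_label1_nil_iff]), Finset.sum_pair (by simp [ext_iff])]

theorem adjOp_label1_cons (f : TreeV → ℝ) (a : Bool) (t : List Bool) :
    adjOp f (label1 (a :: t)) =
      f (label2 a t) + (f (label2 true (a :: t)) + f (label2 false (a :: t))) := by
  classical
  rw [adjOp, tsum_ite_eq_sum_of_iff {label2 a t, label2 true (a :: t), label2 false (a :: t)}
    (by simp [treeAdj_label1_cons_iff]), Finset.sum_insert (by simp [ext_iff]),
    Finset.sum_pair (by simp [ext_iff])]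

@[simp] theorem treePhi_label1 (s : List Bool) : treePhi (label1 s) = 0 := if_pos rfl

theorem treePhi_label2 (b : Bool) (s : List Bool) :
    treePhi (label2 b s) = (if (b :: s).getLast! then 1 else -1) * (-(1 / 2)) ^ s.length := by
  simp [treePhi]

theorem treePhi_label2_nil (b : Bool) : treePhi (label2 b []) = if b then 1 else -1 := by
  cases b <;> simp [treePhi_label2]

theorem treePhi_label2_cons (b a : Bool) (t : List Bool) :
    treePhi (label2 b (a :: t)) = -(1 / 2) * treePhi (label2 a t) := by
  simp [treePhi_label2, pow_succ]
  split_ifs <;> ring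

theorem sq_treePhi_label2 (b : Bool) (s : List Bool) :
    treePhi (label2 b s) ^ 2 = (1 / 4) ^ s.length := by
  rw [treePhi_label2, mul_pow, pow_right_comm _ s.length 2]
  split_ifs <;> norm_num

theorem summable_sq_treePhi : Summable fun v : TreeV => treePhi v ^ 2 := by
  have hinj : Function.Injective fun v : TreeV => v.1.1 :: v.1.2 := fun x y h => by
    simpa [ext_iff, Prod.ext_iff] using h
  have hwords : Summable fun l : List Bool => 16 * (1 / 4 : ℝ) ^ l.length :=
    (List.summable_pow_length (by norm_num) (by norm_num)).mul_left 16
  refine .of_nonneg_of_le (fun _ => sq_nonneg _) (fun v => ?_) (hwords.comp_injective hinj)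
  induction v using label_cases with
  | label1 => simp
  | label2 b s =>
    show treePhi (label2 b s) ^ 2 ≤ 16 * (1 / 4) ^ (s.length + 2)
    rw [sq_treePhi_label2]
    exact le_of_eq (by ring)

theorem treePhi_ne_zero : treePhi ≠ 0 := fun h => by
  simpa [treePhi_label2_nil] using congrFun h (label2 true [])

theorem adjOp_treePhi (x : TreeV) : adjOp treePhi x = 0 := by
  induction x using label_cases with
  | label1 s =>
    cases s with
    | nil => simp [adjOp_label1_nil, treePhi_label2_nil]
    | cons a t => rw [adjOp_label1_cons, treePhi_label2_cons, treePhi_label2_cons]; ring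
  | label2 b s => simp [adjOp_label2]

end TreeV

open scoped Classical in
/-- `treePhi` is a nonzero `ℓ²` eigenfunction of the adjacency operator
`(Lφ)(x) = Σ_{y ∼ x} φ(y)` with eigenvalue `0`; in particular `0` is an eigenvalue
of `L` on this tree (which comes from `M = [[0,2],[1,0]]` with `M_{j,j} = 0`). -/
theorem tree_zero_eigenvalue :
    Summable (fun v : TreeV => (treePhi v) ^ 2) ∧
    treePhi ≠ 0 ∧
    ∀ x : TreeV, ∑' y : TreeV, (if treeAdj x y then treePhi y else 0) = 0 :=
  ⟨TreeV.summable_sq_treePhi, TreeV.treePhi_ne_zero, TreeV.adjOp_treePhi⟩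
end
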